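/- Let 𝒳 = 𝒰 * 𝒮 * 𝒱ᵀ be the t-SVD of 𝒳 ∈ ℝ^{N₁×N₂×N₃} and for k < min(N₁,N₂) let 𝒳ₖ = Σ_{i=1}^{k} 𝒰(:,i,:) * 𝒮(i,i,:) * 𝒱(:,i,:)ᵀ. Then 𝒳ₖ is a best approximation to 𝒳 in Frobenius norm among all tensors of tubal rank at most k: 𝒳ₖ = argmin_{𝒞 ∈ 𝕄} ‖𝒳 − 𝒞‖_F, where 𝕄 = {𝒞 = 𝒜 * ℬ : 𝒜 ∈ ℝ^{N₁×k×N₃}, ℬ ∈ ℝ^{k×N₂×N₃}}. -/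

import Mathlib

open Matrix

/-- A third-order `N₁ × N₂ × N₃` real tensor, given by its `N₃` frontal slices. -/
abbrev Tensor3 (N₁ N₂ N₃ : ℕ) := Fin N₃ → Matrix (Fin N₁) (Fin N₂) ℝ

/-- The t-product, written slice-wise: the `k`-th frontal slice of `𝒜 * ℬ` is
`Σⱼ A^{(k−j)} B^{(j)}` (indices mod `N₃`, 0-indexed). -/
def tProd {N₁ N₂ L N₃ : ℕ} (A : Tensor3 N₁ N₂ N₃) (B : Tensor3 N₂ L N₃) :
    Tensor3 N₁ L N₃ :=
  fun k => ∑ j : Fin N₃, A (k - j) * B j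

/-- The tensor transpose: transpose each frontal slice and reverse the order of
slices `2` through `N₃`. -/
def tTranspose {N₁ N₂ N₃ : ℕ} (A : Tensor3 N₁ N₂ N₃) : Tensor3 N₂ N₁ N₃ :=
  fun k => (A (-k))ᵀ

/-- The identity tensor: first frontal slice is `I_N`, remaining slices are zero. -/
def idTensor (N N₃ : ℕ) : Tensor3 N N N₃ :=
  fun k => if (k : ℕ) = 0 then (1 : Matrix (Fin N) (Fin N) ℝ) else 0

/-- A tensor is orthogonal if `𝒰ᵀ * 𝒰 = 𝒰 * 𝒰ᵀ = ℐ`. -/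
def IsOrthogonalTensor {N N₃ : ℕ} (U : Tensor3 N N N₃) : Prop :=
  tProd (tTranspose U) U = idTensor N N₃ ∧ tProd U (tTranspose U) = idTensor N N₃

/-- The tensor Frobenius norm `‖𝒳‖_F = sqrt(Σ_{ijk} 𝒳_{ijk}²)`. -/
noncomputable def frobNorm {N₁ N₂ N₃ : ℕ} (X : Tensor3 N₁ N₂ N₃) : ℝ :=
  Real.sqrt (∑ i : Fin N₃, ∑ p : Fin N₁, ∑ q : Fin N₂, (X i p q) ^ 2)

/-- The unnormalized `n × n` DFT matrix. -/
noncomputable def dftMatrix (n : ℕ) : Matrix (Fin n) (Fin n) ℂ :=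
  fun i j => Complex.exp (2 * Real.pi * Complex.I / n) ^ ((i : ℕ) * (j : ℕ))

/-- The `i`-th frontal slice of `fft(X, [], 3)`. -/
noncomputable def fftSlice {N₁ N₂ N₃ : ℕ} (X : Tensor3 N₁ N₂ N₃) (i : Fin N₃) :
    Matrix (Fin N₁) (Fin N₂) ℂ :=
  fun p q => ∑ j : Fin N₃, dftMatrix N₃ i j * (X j p q : ℂ)

/-- The `j`-th diagonal entry of the `i`-th Fourier-domain frontal slice. -/
noncomputable def fourierDiagEntry {N₁ N₂ N₃ : ℕ} (S : Tensor3 N₁ N₂ N₃)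
    (i : Fin N₃) (j : ℕ) : ℂ :=
  if h1 : j < N₁ then if h2 : j < N₂ then fftSlice S i ⟨j, h1⟩ ⟨j, h2⟩ else 0 else 0

/-- Truncation keeping only the leading `k × k` principal block of each frontal slice. -/
def truncTensor {N₁ N₂ N₃ : ℕ} (k : ℕ) (S : Tensor3 N₁ N₂ N₃) : Tensor3 N₁ N₂ N₃ :=
  fun i p q => if (p : ℕ) < k ∧ (q : ℕ) < k then S i p q else 0

section RootLemmas
variable {n : ℕ} {ω : ℂ}

lemma pow_val_mod (hω : ω ^ n = 1) (m : ℕ) : ω ^ (m % n) = ω ^ m := by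
  conv_rhs => rw [← Nat.div_add_mod m n, pow_add, pow_mul, hω, one_pow, one_mul]

lemma pow_fin_add (hω : ω ^ n = 1) (a b : Fin n) :
    ω ^ ((a + b : Fin n) : ℕ) = ω ^ (a : ℕ) * ω ^ (b : ℕ) := by
  rw [Fin.val_add, pow_val_mod hω, pow_add]

lemma pow_fin_neg_mul (hω : ω ^ n = 1) (a : Fin n) :
    ω ^ ((-a : Fin n) : ℕ) * ω ^ (a : ℕ) = 1 := by
  haveI : NeZero n := NeZero.of_pos a.pos
  rw [← pow_fin_add hω, neg_add_cancel, Fin.val_zero, pow_zero]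

lemma conj_pow_val (hω : ω ^ n = 1) (habs : ‖ω‖ = 1) (a : Fin n) :
    starRingEnd ℂ (ω ^ (a : ℕ)) = ω ^ ((-a : Fin n) : ℕ) := by
  have h1 : ‖ω ^ (a : ℕ)‖ = 1 := by rw [norm_pow, habs, one_pow]
  rw [← Complex.inv_eq_conj h1]
  exact inv_eq_of_mul_eq_one_left (pow_fin_neg_mul hω a)
end RootLemmas

noncomputable def zet (n : ℕ) : ℂ := Complex.exp (2 * Real.pi * Complex.I / n)

lemma zet_pow (n : ℕ) (hn : n ≠ 0) : zet n ^ n = 1 := by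
  rw [zet, ← Complex.exp_nat_mul]
  have : (n : ℂ) * (2 * Real.pi * Complex.I / n) = 2 * Real.pi * Complex.I := by
    rw [mul_div_assoc', mul_comm, mul_div_assoc, div_self (Nat.cast_ne_zero.mpr hn), mul_one]
  rw [this, Complex.exp_two_pi_mul_I]

lemma zet_abs (n : ℕ) : ‖zet n‖ = 1 := by
  rw [zet, Complex.norm_exp]
  have : (2 * (Real.pi:ℂ) * Complex.I / n).re = 0 := by
    simp [Complex.div_re]
  rw [this, Real.exp_zero]

lemma dft_eq (n : ℕ) (i j : Fin n) : dftMatrix n i j = (zet n ^ (i:ℕ)) ^ (j:ℕ) := by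
  rw [dftMatrix, pow_mul]; rfl

lemma fftSlice_eq {N₁ N₂ N₃ : ℕ} (X : Tensor3 N₁ N₂ N₃) (i : Fin N₃) (p : Fin N₁) (q : Fin N₂) :
    fftSlice X i p q = ∑ j : Fin N₃, (zet N₃ ^ (i:ℕ)) ^ (j:ℕ) * (X j p q : ℂ) := by
  rw [fftSlice]
  exact Finset.sum_congr rfl fun j _ => by rw [dft_eq]

lemma xi_pow_n {N₃ : ℕ} (i : Fin N₃) : (zet N₃ ^ (i:ℕ)) ^ N₃ = 1 := by
  rw [← pow_mul, mul_comm, pow_mul, zet_pow N₃ i.pos.ne', one_pow]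

lemma xi_abs {N₃ : ℕ} (i : Fin N₃) : ‖zet N₃ ^ (i:ℕ)‖ = 1 := by
  rw [norm_pow, zet_abs, one_pow]

lemma fftSlice_tProd {N₁ N₂ L N₃ : ℕ} (A : Tensor3 N₁ N₂ N₃) (B : Tensor3 N₂ L N₃) (i : Fin N₃) :
    fftSlice (tProd A B) i = fftSlice A i * fftSlice B i := by
  haveI : NeZero N₃ := NeZero.of_pos i.pos
  set ξ := zet N₃ ^ (i:ℕ) with hξ
  have hξn : ξ ^ N₃ = 1 := xi_pow_n i
  funext p q
  calc fftSlice (tProd A B) i p q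
      = ∑ j : Fin N₃, ∑ l : Fin N₃, ∑ r : Fin N₂,
          ξ ^ (j:ℕ) * ((A (j - l) p r : ℂ) * (B l r q : ℂ)) := by
        rw [fftSlice_eq]
        refine Finset.sum_congr rfl fun j _ => ?_
        simp only [tProd, Matrix.sum_apply, Matrix.mul_apply]
        push_cast
        rw [Finset.mul_sum]
        exact Finset.sum_congr rfl fun l _ => by rw [Finset.mul_sum]
    _ = ∑ l : Fin N₃, ∑ j : Fin N₃, ∑ r : Fin N₂,
          ξ ^ (j:ℕ) * ((A (j - l) p r : ℂ) * (B l r q : ℂ)) := Finset.sum_comm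
    _ = ∑ l : Fin N₃, ∑ m : Fin N₃, ∑ r : Fin N₂,
          (ξ ^ (m:ℕ) * (A m p r : ℂ)) * (ξ ^ (l:ℕ) * (B l r q : ℂ)) := by
        refine Finset.sum_congr rfl fun l _ => ?_
        refine (Fintype.sum_equiv (Equiv.addRight l) _ _ fun m => ?_).symm
        simp only [Equiv.coe_addRight, add_sub_cancel_right]
        rw [pow_fin_add hξn]
        exact Finset.sum_congr rfl fun r _ => by ring
    _ = ∑ m : Fin N₃, ∑ l : Fin N₃, ∑ r : Fin N₂,
          (ξ ^ (m:ℕ) * (A m p r : ℂ)) * (ξ ^ (l:ℕ) * (B l r q : ℂ)) := Finset.sum_comm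
    _ = ∑ m : Fin N₃, ∑ r : Fin N₂, ∑ l : Fin N₃,
          (ξ ^ (m:ℕ) * (A m p r : ℂ)) * (ξ ^ (l:ℕ) * (B l r q : ℂ)) :=
        Finset.sum_congr rfl fun m _ => Finset.sum_comm
    _ = ∑ r : Fin N₂, ∑ m : Fin N₃, ∑ l : Fin N₃,
          (ξ ^ (m:ℕ) * (A m p r : ℂ)) * (ξ ^ (l:ℕ) * (B l r q : ℂ)) := Finset.sum_comm
    _ = (fftSlice A i * fftSlice B i) p q := by
        rw [Matrix.mul_apply]
        refine Finset.sum_congr rfl fun r _ => ?_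
        rw [fftSlice_eq, fftSlice_eq, Finset.sum_mul_sum]

lemma fftSlice_tTranspose {N₁ N₂ N₃ : ℕ} (A : Tensor3 N₁ N₂ N₃) (i : Fin N₃) :
    fftSlice (tTranspose A) i = (fftSlice A i)ᴴ := by
  haveI : NeZero N₃ := NeZero.of_pos i.pos
  set ξ := zet N₃ ^ (i:ℕ) with hξ
  have hξn : ξ ^ N₃ = 1 := xi_pow_n i
  funext p q
  rw [Matrix.conjTranspose_apply, fftSlice_eq, fftSlice_eq, star_sum]
  refine (Fintype.sum_equiv (Equiv.neg (Fin N₃)) _ _ fun j => ?_).symm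
  simp only [Equiv.neg_apply, tTranspose, Matrix.transpose_apply, neg_neg]
  rw [star_mul', Complex.star_def, Complex.conj_ofReal,
    conj_pow_val hξn (xi_abs i) j]

lemma fftSlice_id {N N₃ : ℕ} (i : Fin N₃) : fftSlice (idTensor N N₃) i = 1 := by
  haveI : NeZero N₃ := NeZero.of_pos i.pos
  funext p q
  rw [fftSlice_eq, Finset.sum_eq_single (0 : Fin N₃)]
  · simp [idTensor, Matrix.one_apply, apply_ite (fun x : ℝ => (x : ℂ))]
  · intro j _ hj
    have : (j : ℕ) ≠ 0 := fun h => hj (Fin.ext (by simp [h]))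
    simp [idTensor, this]
  · simp

lemma fftSlice_sub {N₁ N₂ N₃ : ℕ} (X Y : Tensor3 N₁ N₂ N₃) (i : Fin N₃) :
    fftSlice (X - Y) i = fftSlice X i - fftSlice Y i := by
  funext p q
  simp only [fftSlice, Pi.sub_apply, Matrix.sub_apply]
  push_cast
  simp [mul_sub, Finset.sum_sub_distrib]

lemma fftSlice_trunc {N₁ N₂ N₃ : ℕ} (k : ℕ) (S : Tensor3 N₁ N₂ N₃) (i : Fin N₃)
    (p : Fin N₁) (q : Fin N₂) :
    fftSlice (truncTensor k S) i p q =
      if (p : ℕ) < k ∧ (q : ℕ) < k then fftSlice S i p q else 0 := by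
  simp only [fftSlice, truncTensor]
  split_ifs with h <;> simp

lemma eta_sum {n : ℕ} (hn : n ≠ 0) (j j' : Fin n) :
    ∑ i : Fin n, (zet n ^ (j:ℕ) * (starRingEnd ℂ (zet n)) ^ (j':ℕ)) ^ (i:ℕ)
      = if j = j' then (n:ℂ) else 0 := by
  have hζ : zet n ^ n = 1 := zet_pow n hn
  have habs : ‖zet n‖ = 1 := zet_abs n
  have hcz : starRingEnd ℂ (zet n) = (zet n)⁻¹ := (Complex.inv_eq_conj habs).symm
  have hζne : zet n ≠ 0 := by
    intro h; rw [h] at habs; simp at habs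
  set η := zet n ^ (j:ℕ) * (starRingEnd ℂ (zet n)) ^ (j':ℕ) with hη
  have hsum : ∑ i : Fin n, η ^ (i:ℕ) = ∑ i ∈ Finset.range n, η ^ i :=
    Fin.sum_univ_eq_sum_range _ n
  by_cases hjj : j = j'
  · subst hjj
    have h1 : η = 1 := by
      rw [hη, hcz, inv_pow, mul_inv_cancel₀ (pow_ne_zero _ hζne)]
    rw [hsum, if_pos rfl]
    simp [h1]
  · have hηne : η ≠ 1 := by
      intro h
      apply hjj
      rw [hη, hcz, inv_pow, ← div_eq_mul_inv,
        div_eq_one_iff_eq (pow_ne_zero _ hζne)] at h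
      exact Fin.ext ((Complex.isPrimitiveRoot_exp n hn).pow_inj j.isLt j'.isLt h)
    have hηn : η ^ n = 1 := by
      rw [hη, mul_pow, ← pow_mul, ← pow_mul, mul_comm (j:ℕ) n, mul_comm (j':ℕ) n,
        pow_mul, pow_mul, hζ, ← _root_.map_pow, hζ, _root_.map_one, one_pow, one_pow, one_mul]
    rw [hsum, geom_sum_eq hηne, hηn, sub_self, zero_div, if_neg hjj]

lemma parseval_tube {N₃ : ℕ} (hn : N₃ ≠ 0) (y : Fin N₃ → ℝ) :
    ∑ i : Fin N₃, Complex.normSq (∑ j : Fin N₃, (zet N₃ ^ (i:ℕ)) ^ (j:ℕ) * (y j : ℂ))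
      = N₃ * ∑ j : Fin N₃, (y j)^2 := by
  set ζ := zet N₃ with hζdef
  have key : (∑ i : Fin N₃, ((∑ j : Fin N₃, (ζ ^ (i:ℕ)) ^ (j:ℕ) * (y j:ℂ)) *
      starRingEnd ℂ (∑ j : Fin N₃, (ζ ^ (i:ℕ)) ^ (j:ℕ) * (y j:ℂ))))
      = (N₃:ℂ) * ∑ j : Fin N₃, (y j:ℂ)^2 := by
    calc ∑ i : Fin N₃, ((∑ j : Fin N₃, (ζ ^ (i:ℕ)) ^ (j:ℕ) * (y j:ℂ)) *
          starRingEnd ℂ (∑ j : Fin N₃, (ζ ^ (i:ℕ)) ^ (j:ℕ) * (y j:ℂ)))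
        = ∑ i : Fin N₃, ∑ j : Fin N₃, ∑ j' : Fin N₃,
            ((ζ ^ (j:ℕ)) * (starRingEnd ℂ ζ) ^ (j':ℕ)) ^ (i:ℕ) * ((y j:ℂ) * (y j':ℂ)) := by
          refine Finset.sum_congr rfl fun i _ => ?_
          rw [map_sum, Finset.sum_mul_sum]
          refine Finset.sum_congr rfl fun j _ => Finset.sum_congr rfl fun j' _ => ?_
          have hswap : ∀ (a : ℂ) (m l : ℕ), (a^m)^l = (a^l)^m := fun a m l => by
            rw [← pow_mul, mul_comm, pow_mul]
          rw [_root_.map_mul, _root_.map_pow, _root_.map_pow, Complex.conj_ofReal, mul_pow,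
            hswap ζ (j:ℕ) (i:ℕ), hswap (starRingEnd ℂ ζ) (j':ℕ) (i:ℕ)]
          ring
      _ = ∑ j : Fin N₃, ∑ j' : Fin N₃,
            (∑ i : Fin N₃, ((ζ ^ (j:ℕ)) * (starRingEnd ℂ ζ) ^ (j':ℕ)) ^ (i:ℕ)) * ((y j:ℂ) * (y j':ℂ)) := by
          rw [Finset.sum_comm]
          refine Finset.sum_congr rfl fun j _ => ?_
          rw [Finset.sum_comm]
          refine Finset.sum_congr rfl fun j' _ => ?_
          rw [Finset.sum_mul]
      _ = ∑ j : Fin N₃, ∑ j' : Fin N₃,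
            (if j = j' then (N₃:ℂ) else 0) * ((y j:ℂ) * (y j':ℂ)) := by
          refine Finset.sum_congr rfl fun j _ => Finset.sum_congr rfl fun j' _ => ?_
          rw [eta_sum hn]
      _ = (N₃:ℂ) * ∑ j : Fin N₃, (y j:ℂ)^2 := by
          rw [Finset.mul_sum]
          refine Finset.sum_congr rfl fun j _ => ?_
          simp only [ite_mul, zero_mul, Finset.sum_ite_eq, Finset.mem_univ, if_true]
          ring
  have lhs_eq : (∑ i : Fin N₃, ((∑ j : Fin N₃, (ζ ^ (i:ℕ)) ^ (j:ℕ) * (y j:ℂ)) *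
      starRingEnd ℂ (∑ j : Fin N₃, (ζ ^ (i:ℕ)) ^ (j:ℕ) * (y j:ℂ))))
      = ((∑ i : Fin N₃, Complex.normSq (∑ j : Fin N₃, (ζ ^ (i:ℕ)) ^ (j:ℕ) * (y j:ℂ)) : ℝ) : ℂ) := by
    push_cast
    exact Finset.sum_congr rfl fun i _ => Complex.mul_conj _
  rw [lhs_eq] at key
  have : ((N₃:ℂ) * ∑ j : Fin N₃, (y j:ℂ)^2) = (((N₃:ℝ) * ∑ j : Fin N₃, (y j)^2 : ℝ) : ℂ) := by
    push_cast; ring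
  rw [this] at key
  exact_mod_cast key

noncomputable def cfrobSq {m n : ℕ} (M : Matrix (Fin m) (Fin n) ℂ) : ℝ :=
  ∑ p : Fin m, ∑ q : Fin n, Complex.normSq (M p q)

lemma cfrobSq_nonneg {m n : ℕ} (M : Matrix (Fin m) (Fin n) ℂ) : 0 ≤ cfrobSq M :=
  Finset.sum_nonneg fun p _ => Finset.sum_nonneg fun q _ => Complex.normSq_nonneg _

lemma trace_conjTranspose_mul {m n : ℕ} (M : Matrix (Fin m) (Fin n) ℂ) :
    (Mᴴ * M).trace = (cfrobSq M : ℂ) := by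
  rw [Matrix.trace, cfrobSq]
  push_cast
  rw [Finset.sum_comm]
  refine Finset.sum_congr rfl fun p _ => ?_
  rw [Matrix.diag_apply, Matrix.mul_apply]
  refine Finset.sum_congr rfl fun q _ => ?_
  rw [Matrix.conjTranspose_apply]
  rw [mul_comm, Complex.star_def, Complex.mul_conj]

lemma cfrobSq_eq_of_trace_eq {m n m' n' : ℕ} {M : Matrix (Fin m) (Fin n) ℂ}
    {M' : Matrix (Fin m') (Fin n') ℂ} (h : (Mᴴ * M).trace = (M'ᴴ * M').trace) :
    cfrobSq M = cfrobSq M' := by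
  have := h
  rw [trace_conjTranspose_mul, trace_conjTranspose_mul] at this
  exact_mod_cast this

lemma cfrobSq_unitary_left {m n : ℕ} (U : Matrix (Fin m) (Fin m) ℂ)
    (M : Matrix (Fin m) (Fin n) ℂ) (hU : Uᴴ * U = 1) : cfrobSq (U * M) = cfrobSq M := by
  refine cfrobSq_eq_of_trace_eq ?_
  rw [Matrix.conjTranspose_mul]
  rw [show Mᴴ * Uᴴ * (U * M) = Mᴴ * (Uᴴ * U) * M by
    rw [Matrix.mul_assoc, Matrix.mul_assoc, Matrix.mul_assoc]]
  rw [hU, Matrix.mul_one]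

lemma cfrobSq_unitary_right {m n : ℕ} (M : Matrix (Fin m) (Fin n) ℂ)
    (V : Matrix (Fin n) (Fin n) ℂ) (hV : V * Vᴴ = 1) : cfrobSq (M * V) = cfrobSq M := by
  refine cfrobSq_eq_of_trace_eq ?_
  rw [Matrix.conjTranspose_mul,
    show Vᴴ * Mᴴ * (M * V) = Vᴴ * (Mᴴ * M * V) by rw [Matrix.mul_assoc, Matrix.mul_assoc],
    Matrix.trace_mul_comm, Matrix.mul_assoc, hV, Matrix.mul_one]

lemma cfrobSq_mul_isometry_le {a b c : ℕ} (N : Matrix (Fin a) (Fin b) ℂ)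
    (W : Matrix (Fin b) (Fin c) ℂ) (hW : Wᴴ * W = 1) : cfrobSq (N * W) ≤ cfrobSq N := by
  set P : Matrix (Fin b) (Fin b) ℂ := 1 - W * Wᴴ with hP
  have hPH : Pᴴ = P := by
    rw [hP, Matrix.conjTranspose_sub, Matrix.conjTranspose_one, Matrix.conjTranspose_mul,
      Matrix.conjTranspose_conjTranspose]
  have hWWW : (W * Wᴴ) * (W * Wᴴ) = W * Wᴴ := by
    rw [show W * Wᴴ * (W * Wᴴ) = W * (Wᴴ * W) * Wᴴ by
      rw [Matrix.mul_assoc, Matrix.mul_assoc, Matrix.mul_assoc], hW, Matrix.mul_one]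
  have hPP : P * P = P := by
    rw [hP, Matrix.sub_mul, Matrix.mul_sub, Matrix.mul_sub, Matrix.mul_one, Matrix.one_mul,
      hWWW, Matrix.mul_one]
    abel
  have key : cfrobSq N = cfrobSq (N * W) + cfrobSq (N * P) := by
    have h1 : ((N * W)ᴴ * (N * W)).trace = (Nᴴ * N * (W * Wᴴ)).trace := by
      rw [Matrix.conjTranspose_mul,
        show Wᴴ * Nᴴ * (N * W) = Wᴴ * (Nᴴ * N * W) by rw [Matrix.mul_assoc, Matrix.mul_assoc],
        Matrix.trace_mul_comm, Matrix.mul_assoc]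
    have h2 : ((N * P)ᴴ * (N * P)).trace = (Nᴴ * N * P).trace := by
      rw [Matrix.conjTranspose_mul, hPH,
        show P * Nᴴ * (N * P) = P * (Nᴴ * N * P) by rw [Matrix.mul_assoc, Matrix.mul_assoc],
        Matrix.trace_mul_comm,
        show Nᴴ * N * P * P = Nᴴ * N * (P * P) by rw [Matrix.mul_assoc],
        hPP]
    have h3 : (Nᴴ * N).trace = ((N * W)ᴴ * (N * W)).trace + ((N * P)ᴴ * (N * P)).trace := by
      rw [h1, h2, ← Matrix.trace_add, ← Matrix.mul_add, hP,
        show W * Wᴴ + (1 - W * Wᴴ) = (1 : Matrix (Fin b) (Fin b) ℂ) by abel, Matrix.mul_one]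
    rw [trace_conjTranspose_mul, trace_conjTranspose_mul, trace_conjTranspose_mul] at h3
    exact_mod_cast h3
  rw [key]
  exact le_add_of_nonneg_right (cfrobSq_nonneg _)

lemma isometry_row_sum_le_one {b c : ℕ} (W : Matrix (Fin b) (Fin c) ℂ)
    (hW : Wᴴ * W = 1) (p : Fin b) : ∑ t : Fin c, Complex.normSq (W p t) ≤ 1 := by
  set Q : Matrix (Fin b) (Fin b) ℂ := W * Wᴴ with hQ
  have hQH : Qᴴ = Q := by
    rw [hQ, Matrix.conjTranspose_mul, Matrix.conjTranspose_conjTranspose]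
  have hQQ : Q * Q = Q := by
    rw [hQ, show W * Wᴴ * (W * Wᴴ) = W * (Wᴴ * W) * Wᴴ by
      rw [Matrix.mul_assoc, Matrix.mul_assoc, Matrix.mul_assoc], hW, Matrix.mul_one]
  set d : ℝ := ∑ t : Fin c, Complex.normSq (W p t) with hd
  have hQpp : Q p p = (d : ℂ) := by
    rw [hQ, Matrix.mul_apply, hd]
    push_cast
    refine Finset.sum_congr rfl fun t _ => ?_
    rw [Matrix.conjTranspose_apply, Complex.star_def, Complex.mul_conj]
  have hc : ∀ q, Q q p = starRingEnd ℂ (Q p q) := fun q => by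
    have h := congrFun (congrFun hQH p) q
    rw [Matrix.conjTranspose_apply] at h
    rw [← h, Complex.star_def, Complex.conj_conj]
  have hdsum : (d : ℂ) = ((∑ q : Fin b, Complex.normSq (Q p q) : ℝ) : ℂ) := by
    rw [← hQpp]
    conv_lhs => rw [← hQQ]
    rw [Matrix.mul_apply]
    push_cast
    refine Finset.sum_congr rfl fun q _ => ?_
    rw [hc q, Complex.mul_conj]
  have hds : d = ∑ q : Fin b, Complex.normSq (Q p q) := by exact_mod_cast hdsum
  have hsingle : Complex.normSq (Q p p) ≤ ∑ q : Fin b, Complex.normSq (Q p q) :=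
    Finset.single_le_sum (fun q _ => Complex.normSq_nonneg _) (Finset.mem_univ p)
  have h1 : Complex.normSq (Q p p) = d^2 := by
    rw [hQpp, Complex.normSq_ofReal, sq]
  have hd0 : 0 ≤ d := Finset.sum_nonneg fun t _ => Complex.normSq_nonneg _
  have hd2 : d^2 ≤ d := by rw [← h1, hds]; exact hsingle
  nlinarith

lemma isometry_col_sum {b c : ℕ} (W : Matrix (Fin b) (Fin c) ℂ)
    (hW : Wᴴ * W = 1) (t : Fin c) : ∑ p : Fin b, Complex.normSq (W p t) = 1 := by
  have h := congrFun (congrFun hW t) t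
  rw [Matrix.mul_apply, Matrix.one_apply_eq] at h
  have h2 : ((∑ p : Fin b, Complex.normSq (W p t) : ℝ) : ℂ) = 1 := by
    rw [← h]
    push_cast
    refine Finset.sum_congr rfl fun p _ => ?_
    rw [Matrix.conjTranspose_apply, mul_comm, Complex.star_def, Complex.mul_conj]
  exact_mod_cast h2

lemma exists_kernel_W {k N₂ : ℕ} (B : Matrix (Fin k) (Fin N₂) ℂ) :
    ∃ (m : ℕ) (W : Matrix (Fin N₂) (Fin m) ℂ),
      Wᴴ * W = 1 ∧ B * W = 0 ∧ N₂ ≤ k + m := by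
  classical
  let e := WithLp.linearEquiv 2 ℂ (Fin N₂ → ℂ)
  let L : EuclideanSpace ℂ (Fin N₂) →ₗ[ℂ] (Fin k → ℂ) :=
    (Matrix.mulVecLin B).comp e.toLinearMap
  let K : Submodule ℂ (EuclideanSpace ℂ (Fin N₂)) := LinearMap.ker L
  let m := Module.finrank ℂ K
  let bas : OrthonormalBasis (Fin m) ℂ K := stdOrthonormalBasis ℂ K
  refine ⟨m, Matrix.of fun p t => ((bas t : EuclideanSpace ℂ (Fin N₂)) p), ?_, ?_, ?_⟩
  · funext t t'
    have horth := bas.orthonormal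
    rw [orthonormal_iff_ite] at horth
    have h := horth t t'
    rw [Submodule.coe_inner, PiLp.inner_apply] at h
    simp only [RCLike.inner_apply] at h
    rw [Matrix.mul_apply]
    simp only [Matrix.conjTranspose_apply]
    rw [Matrix.one_apply]
    rw [← h]
    exact Finset.sum_congr rfl fun x _ => mul_comm _ _
  · funext r t
    have hmem : (bas t : EuclideanSpace ℂ (Fin N₂)) ∈ K := (bas t).2
    have h0 : L (bas t : EuclideanSpace ℂ (Fin N₂)) = 0 := hmem
    have h0' : Matrix.mulVec B (fun p => (bas t : EuclideanSpace ℂ (Fin N₂)) p) = 0 := h0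
    rw [Matrix.zero_apply, Matrix.mul_apply]
    have := congrFun h0' r
    rw [Matrix.mulVec, dotProduct] at this
    exact this
  · have h1 : Module.finrank ℂ (LinearMap.range L) + m = N₂ := by
      have := LinearMap.finrank_range_add_finrank_ker L
      rw [finrank_euclideanSpace_fin] at this
      exact this
    have h2 : Module.finrank ℂ (LinearMap.range L) ≤ k := by
      have := Submodule.finrank_le (LinearMap.range L)
      simpa using this
    omega

lemma tail_bound (s c : ℕ → ℝ) (N₂ k : ℕ) (hk : k ≤ N₂)
    (hs0 : ∀ j, 0 ≤ s j) (hsmono : ∀ j j', j ≤ j' → s j' ≤ s j)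
    (hc0 : ∀ j, 0 ≤ c j) (hc1 : ∀ j, c j ≤ 1)
    (hcsum : (N₂:ℝ) - k ≤ ∑ j ∈ Finset.range N₂, c j) :
    ∑ j ∈ Finset.range N₂, (if k ≤ j then (s j)^2 else 0)
      ≤ ∑ j ∈ Finset.range N₂, (s j)^2 * c j := by
  have hsplit : ∀ f : ℕ → ℝ, ∑ j ∈ Finset.range N₂, f j
      = ∑ j ∈ Finset.range k, f j + ∑ j ∈ Finset.Ico k N₂, f j := by
    intro f
    rw [Finset.range_eq_Ico, ← Finset.sum_Ico_consecutive f (Nat.zero_le k) hk,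
      ← Finset.range_eq_Ico]
  rw [hsplit, hsplit (fun j => (s j)^2 * c j)]
  have hL1 : ∑ j ∈ Finset.range k, (if k ≤ j then (s j)^2 else 0) = 0 := by
    refine Finset.sum_eq_zero fun j hj => ?_
    rw [if_neg (by simpa using Finset.mem_range.mp hj)]
  have hL2 : ∑ j ∈ Finset.Ico k N₂, (if k ≤ j then (s j)^2 else 0)
      = ∑ j ∈ Finset.Ico k N₂, (s j)^2 := by
    refine Finset.sum_congr rfl fun j hj => ?_
    rw [if_pos (Finset.mem_Ico.mp hj).1]
  rw [hL1, hL2, zero_add]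
  -- suffices: ∑_{Ico} s² (1 - c) ≤ ∑_{range k} s² c
  have key : ∑ j ∈ Finset.Ico k N₂, (s j)^2 * (1 - c j)
      ≤ ∑ j ∈ Finset.range k, (s j)^2 * c j := by
    have step1 : ∑ j ∈ Finset.Ico k N₂, (s j)^2 * (1 - c j)
        ≤ ∑ j ∈ Finset.Ico k N₂, (s k)^2 * (1 - c j) := by
      refine Finset.sum_le_sum fun j hj => ?_
      have h1 : s j ≤ s k := hsmono k j (Finset.mem_Ico.mp hj).1
      have h2 : 0 ≤ 1 - c j := by linarith [hc1 j]
      have h3 : (s j)^2 ≤ (s k)^2 := by nlinarith [hs0 j, hs0 k]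
      nlinarith
    have step2 : ∑ j ∈ Finset.Ico k N₂, (s k)^2 * (1 - c j)
        ≤ (s k)^2 * ∑ j ∈ Finset.range k, c j := by
      rw [← Finset.mul_sum]
      have hcard : ∑ j ∈ Finset.Ico k N₂, (1 - c j)
          = ((N₂:ℝ) - k) - ∑ j ∈ Finset.Ico k N₂, c j := by
        rw [Finset.sum_sub_distrib, Finset.sum_const, Nat.card_Ico, nsmul_eq_mul, mul_one]
        push_cast [Nat.cast_sub hk]
        ring
      have hsum2 : ((N₂:ℝ) - k) - ∑ j ∈ Finset.Ico k N₂, c j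
          ≤ ∑ j ∈ Finset.range k, c j := by
        have := hsplit c
        linarith
      have hsk : (0:ℝ) ≤ (s k)^2 := sq_nonneg _
      rw [hcard]
      exact mul_le_mul_of_nonneg_left hsum2 hsk
    have step3 : (s k)^2 * ∑ j ∈ Finset.range k, c j
        ≤ ∑ j ∈ Finset.range k, (s j)^2 * c j := by
      rw [Finset.mul_sum]
      refine Finset.sum_le_sum fun j hj => ?_
      have h1 : s k ≤ s j := hsmono j k (le_of_lt (Finset.mem_range.mp hj))
      have h2 : (s k)^2 ≤ (s j)^2 := by nlinarith [hs0 j, hs0 k]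
      exact mul_le_mul_of_nonneg_right h2 (hc0 j)
    linarith
  have expand : ∑ j ∈ Finset.Ico k N₂, (s j)^2 * (1 - c j)
      = ∑ j ∈ Finset.Ico k N₂, (s j)^2 - ∑ j ∈ Finset.Ico k N₂, (s j)^2 * c j := by
    rw [← Finset.sum_sub_distrib]
    exact Finset.sum_congr rfl fun j _ => by ring
  linarith [key, expand.symm.le, expand.le]

lemma diag_collapse {M : Type*} [AddCommMonoid M] {N : ℕ} (g : ℕ → M) (v : ℕ) :
    ∑ p : Fin N, (if (p:ℕ) = v then g (p:ℕ) else 0)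
      = if v < N then g v else 0 := by
  by_cases h : v < N
  · rw [if_pos h, Finset.sum_eq_single (⟨v, h⟩ : Fin N)]
    · simp
    · intro q _ hq
      rw [if_neg (fun hc => hq (Fin.ext (by simpa using hc)))]
    · simp
  · rw [if_neg h]
    refine Finset.sum_eq_zero fun p _ => ?_
    rw [if_neg (fun hc => h (lt_of_eq_of_lt hc.symm p.isLt))]

lemma slice_ineq {N₁ N₂ k : ℕ} (hk1 : k < N₁) (hk2 : k < N₂)
    (Uh : Matrix (Fin N₁) (Fin N₁) ℂ) (Vh : Matrix (Fin N₂) (Fin N₂) ℂ)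
    (D Dk : Matrix (Fin N₁) (Fin N₂) ℂ) (s : ℕ → ℝ)
    (hU1 : Uhᴴ * Uh = 1) (hU2 : Uh * Uhᴴ = 1)
    (hV1 : Vhᴴ * Vh = 1) (hV2 : Vh * Vhᴴ = 1)
    (hD : ∀ p q, D p q = if (p:ℕ) = (q:ℕ) then ((s (p:ℕ) : ℝ) : ℂ) else 0)
    (hs0 : ∀ j, 0 ≤ s j) (hsmono : ∀ j j', j ≤ j' → s j' ≤ s j)
    (hsz1 : ∀ j, N₁ ≤ j → s j = 0)
    (hDk : ∀ p q, Dk p q = if (p:ℕ) < k ∧ (q:ℕ) < k then D p q else 0)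
    (Ah : Matrix (Fin N₁) (Fin k) ℂ) (Bh : Matrix (Fin k) (Fin N₂) ℂ) :
    cfrobSq (Uh * D * Vhᴴ - Uh * Dk * Vhᴴ) ≤ cfrobSq (Uh * D * Vhᴴ - Ah * Bh) := by
  classical
  have hVH : Vhᴴ * Vhᴴᴴ = 1 := by rw [Matrix.conjTranspose_conjTranspose, hV1]
  -- LHS as cfrobSq (D - Dk)
  have hLfact : Uh * D * Vhᴴ - Uh * Dk * Vhᴴ = Uh * (D - Dk) * Vhᴴ := by
    rw [Matrix.mul_sub, Matrix.sub_mul]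
  have hLHS : cfrobSq (Uh * D * Vhᴴ - Uh * Dk * Vhᴴ) = cfrobSq (D - Dk) := by
    rw [hLfact, cfrobSq_unitary_right _ _ hVH, cfrobSq_unitary_left _ _ hU1]
  -- RHS as cfrobSq (D - M)
  set M : Matrix (Fin N₁) (Fin N₂) ℂ := Uhᴴ * (Ah * Bh) * Vh with hM
  have hRfact : Uh * D * Vhᴴ - Ah * Bh = Uh * (D - M) * Vhᴴ := by
    rw [Matrix.mul_sub, Matrix.sub_mul, hM]
    congr 1
    rw [show Uh * (Uhᴴ * (Ah * Bh) * Vh) * Vhᴴ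
        = (Uh * Uhᴴ) * (Ah * Bh) * (Vh * Vhᴴ) by
      simp only [Matrix.mul_assoc], hU2, hV2, Matrix.one_mul, Matrix.mul_one]
  have hRHS : cfrobSq (Uh * D * Vhᴴ - Ah * Bh) = cfrobSq (D - M) := by
    rw [hRfact, cfrobSq_unitary_right _ _ hVH, cfrobSq_unitary_left _ _ hU1]
  rw [hLHS, hRHS]
  -- kernel isometry W for B' = Bh * Vh
  obtain ⟨m, W, hWo, hBW, hm⟩ := exists_kernel_W (Bh * Vh)
  have hMW : M * W = 0 := by
    rw [hM, show Uhᴴ * (Ah * Bh) * Vh = (Uhᴴ * Ah) * (Bh * Vh) by simp only [Matrix.mul_assoc],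
      Matrix.mul_assoc, hBW, Matrix.mul_zero]
  have hDMW : (D - M) * W = D * W := by
    rw [Matrix.sub_mul, hMW, sub_zero]
  -- the weights c
  set c : ℕ → ℝ := fun j => if h : j < N₂ then ∑ t : Fin m, Complex.normSq (W ⟨j,h⟩ t) else 0
    with hc
  have hc0 : ∀ j, 0 ≤ c j := by
    intro j; simp only [hc]
    split
    · exact Finset.sum_nonneg fun t _ => Complex.normSq_nonneg _
    · exact le_refl 0
  have hc1 : ∀ j, c j ≤ 1 := by
    intro j; simp only [hc]
    split
    · exact isometry_row_sum_le_one W hWo _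
    · exact zero_le_one
  have hcsum : ∑ j ∈ Finset.range N₂, c j = (m : ℝ) := by
    rw [← Fin.sum_univ_eq_sum_range c N₂]
    have : ∀ q : Fin N₂, c (q : ℕ) = ∑ t : Fin m, Complex.normSq (W q t) := by
      intro q
      simp only [hc, q.isLt, dif_pos, Fin.eta]
    rw [Finset.sum_congr rfl fun q _ => this q, Finset.sum_comm]
    rw [Finset.sum_congr rfl fun t _ => isometry_col_sum W hWo t]
    simp
  -- value of LHS
  have hLval : cfrobSq (D - Dk) = ∑ j ∈ Finset.range N₂, (if k ≤ j then (s j)^2 else 0) := by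
    have hentry : ∀ (p : Fin N₁) (q : Fin N₂), Complex.normSq ((D - Dk) p q)
        = if (p:ℕ) = (q:ℕ) then (if k ≤ (p:ℕ) then (s (p:ℕ))^2 else 0) else 0 := by
      intro p q
      rw [Matrix.sub_apply, hDk, hD]
      by_cases hpq : (p:ℕ) = (q:ℕ)
      · rw [if_pos hpq]
        by_cases hpk : (p:ℕ) < k
        · rw [if_pos ⟨hpk, hpq ▸ hpk⟩, sub_self, if_neg (not_le.mpr hpk)]
          simp
        · rw [if_neg (fun hcon => hpk hcon.1), sub_zero,
            if_pos (le_of_not_gt hpk), Complex.normSq_ofReal, sq, if_pos hpq]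
      · rw [if_neg hpq]
        split <;> simp
    rw [cfrobSq, Finset.sum_comm]
    calc ∑ q : Fin N₂, ∑ p : Fin N₁, Complex.normSq ((D - Dk) p q)
        = ∑ q : Fin N₂, (if (q:ℕ) < N₁ then (if k ≤ (q:ℕ) then (s (q:ℕ))^2 else 0) else 0) := by
          refine Finset.sum_congr rfl fun q _ => ?_
          rw [← diag_collapse (fun j => if k ≤ j then (s j)^2 else 0) (q:ℕ)]
          exact Finset.sum_congr rfl fun p _ => hentry p q
      _ = ∑ j ∈ Finset.range N₂, (if j < N₁ then (if k ≤ j then (s j)^2 else 0) else 0) :=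
          Fin.sum_univ_eq_sum_range
            (fun j => if j < N₁ then (if k ≤ j then (s j)^2 else 0) else 0) N₂
      _ = ∑ j ∈ Finset.range N₂, (if k ≤ j then (s j)^2 else 0) := by
          refine Finset.sum_congr rfl fun j _ => ?_
          by_cases hj : j < N₁
          · rw [if_pos hj]
          · rw [if_neg hj, hsz1 j (le_of_not_gt hj)]
            simp
  -- value of D * W
  have hDW : ∀ (p : Fin N₁) (t : Fin m), (D * W) p t
      = if h : (p:ℕ) < N₂ then ((s (p:ℕ) : ℝ) : ℂ) * W ⟨(p:ℕ), h⟩ t else 0 := by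
    intro p t
    rw [Matrix.mul_apply]
    have : ∀ q : Fin N₂, D p q * W q t
        = if (q:ℕ) = (p:ℕ) then
            (fun j => if h : j < N₂ then ((s j : ℝ) : ℂ) * W ⟨j, h⟩ t else 0) (q:ℕ) else 0 := by
      intro q
      rw [hD]
      by_cases hpq : (p:ℕ) = (q:ℕ)
      · rw [if_pos hpq, if_pos hpq.symm]
        simp only [q.isLt, dif_pos, Fin.eta, hpq]
      · rw [if_neg hpq, if_neg (Ne.symm hpq), zero_mul]
    rw [Finset.sum_congr rfl fun q _ => this q,
      diag_collapse (M := ℂ) (fun j => if h : j < N₂ then ((s j : ℝ) : ℂ) * W ⟨j, h⟩ t else 0)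
        (p:ℕ)]
    by_cases h : (p:ℕ) < N₂ <;> simp [h]
  have hDWval : cfrobSq (D * W) = ∑ j ∈ Finset.range N₁, (if j < N₂ then (s j)^2 * c j else 0) := by
    rw [cfrobSq]
    have hrow : ∀ p : Fin N₁, ∑ t : Fin m, Complex.normSq ((D * W) p t)
        = if (p:ℕ) < N₂ then (s (p:ℕ))^2 * c (p:ℕ) else 0 := by
      intro p
      by_cases h : (p:ℕ) < N₂
      · rw [if_pos h]
        have : ∀ t : Fin m, Complex.normSq ((D * W) p t)
            = (s (p:ℕ))^2 * Complex.normSq (W ⟨(p:ℕ), h⟩ t) := by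
          intro t
          rw [hDW, dif_pos h, Complex.normSq_mul, Complex.normSq_ofReal, sq]
        rw [Finset.sum_congr rfl fun t _ => this t, ← Finset.mul_sum]
        simp only [hc]
        rw [dif_pos h]
      · rw [if_neg h]
        refine Finset.sum_eq_zero fun t _ => ?_
        rw [hDW, dif_neg h]
        simp
    rw [Finset.sum_congr rfl fun p _ => hrow p]
    exact Fin.sum_univ_eq_sum_range (fun j => if j < N₂ then (s j)^2 * c j else 0) N₁
  have hDWval2 : cfrobSq (D * W) = ∑ j ∈ Finset.range N₂, (s j)^2 * c j := by
    rw [hDWval]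
    rcases le_total N₁ N₂ with h12 | h21
    · have hsp : ∑ j ∈ Finset.range N₂, (s j)^2 * c j
          = ∑ j ∈ Finset.range N₁, (s j)^2 * c j + ∑ j ∈ Finset.Ico N₁ N₂, (s j)^2 * c j := by
        rw [Finset.range_eq_Ico,
          ← Finset.sum_Ico_consecutive (fun j => (s j)^2 * c j) (Nat.zero_le N₁) h12,
          ← Finset.range_eq_Ico]
      have hz : ∑ j ∈ Finset.Ico N₁ N₂, (s j)^2 * c j = 0 := by
        refine Finset.sum_eq_zero fun j hj => ?_
        rw [hsz1 j (Finset.mem_Ico.mp hj).1]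
        simp
      rw [hsp, hz, add_zero]
      refine Finset.sum_congr rfl fun j hj => ?_
      rw [if_pos (lt_of_lt_of_le (Finset.mem_range.mp hj) h12)]
    · have hsp : ∑ j ∈ Finset.range N₁, (if j < N₂ then (s j)^2 * c j else 0)
          = ∑ j ∈ Finset.range N₂, (if j < N₂ then (s j)^2 * c j else 0)
            + ∑ j ∈ Finset.Ico N₂ N₁, (if j < N₂ then (s j)^2 * c j else 0) := by
        rw [Finset.range_eq_Ico,
          ← Finset.sum_Ico_consecutive
            (fun j => if j < N₂ then (s j)^2 * c j else 0) (Nat.zero_le N₂) h21,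
          ← Finset.range_eq_Ico]
      have hz : ∑ j ∈ Finset.Ico N₂ N₁, (if j < N₂ then (s j)^2 * c j else 0) = 0 := by
        refine Finset.sum_eq_zero fun j hj => ?_
        rw [if_neg (not_lt.mpr (Finset.mem_Ico.mp hj).1)]
      rw [hsp, hz, add_zero]
      refine Finset.sum_congr rfl fun j hj => ?_
      rw [if_pos (Finset.mem_range.mp hj)]
  -- combine
  calc cfrobSq (D - Dk) = ∑ j ∈ Finset.range N₂, (if k ≤ j then (s j)^2 else 0) := hLval
    _ ≤ ∑ j ∈ Finset.range N₂, (s j)^2 * c j := by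
        refine tail_bound s c N₂ k (le_of_lt hk2) hs0 hsmono hc0 hc1 ?_
        rw [hcsum]
        have : (N₂ : ℝ) ≤ (k : ℝ) + (m : ℝ) := by exact_mod_cast hm
        linarith
    _ = cfrobSq (D * W) := hDWval2.symm
    _ = cfrobSq ((D - M) * W) := by rw [hDMW]
    _ ≤ cfrobSq (D - M) := cfrobSq_mul_isometry_le _ W hWo

lemma tProd_assoc {a b c d n : ℕ} (A : Tensor3 a b n) (B : Tensor3 b c n) (C : Tensor3 c d n) :
    tProd (tProd A B) C = tProd A (tProd B C) := by
  funext kk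
  haveI : NeZero n := NeZero.of_pos kk.pos
  show ∑ j : Fin n, (tProd A B) (kk - j) * C j = ∑ l : Fin n, A (kk - l) * (tProd B C) l
  calc ∑ j : Fin n, (tProd A B) (kk - j) * C j
      = ∑ j : Fin n, ∑ l : Fin n, A (kk - j - l) * B l * C j := by
        refine Finset.sum_congr rfl fun j _ => ?_
        rw [tProd, Matrix.sum_mul]
    _ = ∑ j : Fin n, ∑ l : Fin n, A (kk - l) * B (l - j) * C j := by
        refine Finset.sum_congr rfl fun j _ => ?_
        refine Fintype.sum_equiv (Equiv.addRight j) _ _ fun x => ?_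
        simp only [Equiv.coe_addRight, add_sub_cancel_right]
        congr 2
        rw [sub_sub, add_comm]
    _ = ∑ l : Fin n, ∑ j : Fin n, A (kk - l) * B (l - j) * C j := Finset.sum_comm
    _ = ∑ l : Fin n, A (kk - l) * (tProd B C) l := by
        refine Finset.sum_congr rfl fun l _ => ?_
        rw [tProd, Matrix.mul_sum]
        exact Finset.sum_congr rfl fun j _ => Matrix.mul_assoc _ _ _

lemma trunc_factor {N₁ N₂ N₃ k : ℕ} (hk1 : k < N₁) (S : Tensor3 N₁ N₂ N₃) :
    ∃ (E : Tensor3 N₁ k N₃) (F : Tensor3 k N₂ N₃), tProd E F = truncTensor k S := by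
  classical
  refine ⟨fun i p q => if (i:ℕ) = 0 ∧ (p:ℕ) = (q:ℕ) then 1 else 0,
    fun i p q => truncTensor k S i ⟨(p:ℕ), lt_trans p.isLt hk1⟩ q, ?_⟩
  funext i
  haveI : NeZero N₃ := NeZero.of_pos i.pos
  set E : Tensor3 N₁ k N₃ := fun i p q => if (i:ℕ) = 0 ∧ (p:ℕ) = (q:ℕ) then 1 else 0 with hE
  set F : Tensor3 k N₂ N₃ :=
    fun i p q => truncTensor k S i ⟨(p:ℕ), lt_trans p.isLt hk1⟩ q with hF
  show ∑ j : Fin N₃, E (i - j) * F j = truncTensor k S i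
  rw [Finset.sum_eq_single i]
  · funext p q
    rw [Matrix.mul_apply]
    have hterm : ∀ r : Fin k, E (i - i) p r * F i r q
        = if (r:ℕ) = (p:ℕ) then
            (fun v => if h : v < k then truncTensor k S i ⟨v, lt_trans h hk1⟩ q else 0) (r:ℕ)
          else 0 := by
      intro r
      simp only [hE, hF, sub_self, Fin.val_zero, true_and]
      by_cases hpr : (p:ℕ) = (r:ℕ)
      · rw [if_pos hpr, if_pos hpr.symm, one_mul, dif_pos r.isLt]
      · rw [if_neg hpr, if_neg (Ne.symm hpr), zero_mul]
    rw [Finset.sum_congr rfl fun r _ => hterm r,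
      diag_collapse (M := ℝ)
        (fun v => if h : v < k then truncTensor k S i ⟨v, lt_trans h hk1⟩ q else 0) (p:ℕ)]
    by_cases hp : (p:ℕ) < k
    · rw [if_pos hp, dif_pos hp]
    · rw [if_neg hp, truncTensor, if_neg (fun hcon => hp hcon.1)]
  · intro j _ hji
    have hne : ((i - j : Fin N₃) : ℕ) ≠ 0 := by
      intro h0
      apply hji
      have : i - j = 0 := Fin.ext (by simpa using h0)
      have := sub_eq_zero.mp this
      exact this.symm
    have hzero : E (i - j) = 0 := by
      funext p q
      rw [hE]
      simp [hne]
    rw [hzero, Matrix.zero_mul]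
  · simp

lemma parseval_total {N₁ N₂ N₃ : ℕ} (hn : N₃ ≠ 0) (Y : Tensor3 N₁ N₂ N₃) :
    ∑ i : Fin N₃, cfrobSq (fftSlice Y i)
      = N₃ * ∑ i : Fin N₃, ∑ p : Fin N₁, ∑ q : Fin N₂, (Y i p q)^2 := by
  calc ∑ i : Fin N₃, cfrobSq (fftSlice Y i)
      = ∑ p : Fin N₁, ∑ q : Fin N₂, ∑ i : Fin N₃, Complex.normSq (fftSlice Y i p q) := by
        simp only [cfrobSq]
        rw [Finset.sum_comm]
        exact Finset.sum_congr rfl fun p _ => Finset.sum_comm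
    _ = ∑ p : Fin N₁, ∑ q : Fin N₂, (N₃ : ℝ) * ∑ j : Fin N₃, (Y j p q)^2 := by
        refine Finset.sum_congr rfl fun p _ => Finset.sum_congr rfl fun q _ => ?_
        calc ∑ i : Fin N₃, Complex.normSq (fftSlice Y i p q)
            = ∑ i : Fin N₃,
                Complex.normSq (∑ j : Fin N₃, (zet N₃ ^ (i:ℕ))^(j:ℕ) * (Y j p q : ℂ)) :=
              Finset.sum_congr rfl fun i _ => by rw [fftSlice_eq]
          _ = N₃ * ∑ j : Fin N₃, (Y j p q)^2 := parseval_tube hn (fun j => Y j p q)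
    _ = (N₃ : ℝ) * ∑ p : Fin N₁, ∑ q : Fin N₂, ∑ j : Fin N₃, (Y j p q)^2 := by
        rw [Finset.mul_sum]
        refine Finset.sum_congr rfl fun p _ => ?_
        rw [Finset.mul_sum]
    _ = N₃ * ∑ i : Fin N₃, ∑ p : Fin N₁, ∑ q : Fin N₂, (Y i p q)^2 := by
        congr 1
        calc ∑ p : Fin N₁, ∑ q : Fin N₂, ∑ j : Fin N₃, (Y j p q)^2
            = ∑ p : Fin N₁, ∑ j : Fin N₃, ∑ q : Fin N₂, (Y j p q)^2 :=
              Finset.sum_congr rfl fun p _ => Finset.sum_comm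
          _ = ∑ j : Fin N₃, ∑ p : Fin N₁, ∑ q : Fin N₂, (Y j p q)^2 := Finset.sum_comm

/-- **Best tubal-rank-`k` approximation via truncated t-SVD.** Let `𝒳 = 𝒰 * 𝒮 * 𝒱ᵀ` be a
t-SVD of `𝒳` (with the Fourier-domain singular values real, nonnegative and nonincreasing
along the diagonal, as produced by the t-SVD algorithm), and for `k < min(N₁,N₂)` let
`𝒳ₖ = Σ_{i=1}^{k} 𝒰(:,i,:) * 𝒮(i,i,:) * 𝒱(:,i,:)ᵀ`, i.e. `𝒳ₖ = 𝒰 * 𝒮ₖ * 𝒱ᵀ` with `𝒮ₖ` the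
truncation of the f-diagonal tensor `𝒮`. Then `𝒳ₖ` lies in
`𝕄 = {𝒜 * ℬ : 𝒜 ∈ ℝ^{N₁×k×N₃}, ℬ ∈ ℝ^{k×N₂×N₃}}` and minimizes `‖𝒳 − 𝒞‖_F` over `𝒞 ∈ 𝕄`. -/
theorem truncated_tSVD_best_approximation (N₁ N₂ N₃ k : ℕ)
    (hk : k < min N₁ N₂)
    (U : Tensor3 N₁ N₁ N₃) (S : Tensor3 N₁ N₂ N₃) (V : Tensor3 N₂ N₂ N₃)
    (X : Tensor3 N₁ N₂ N₃)
    (hU : IsOrthogonalTensor U) (hV : IsOrthogonalTensor V)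
    (hSdiag : ∀ i (p : Fin N₁) (q : Fin N₂), (p : ℕ) ≠ (q : ℕ) → S i p q = 0)
    (hreal : ∀ i j, (fourierDiagEntry S i j).im = 0)
    (hnonneg : ∀ i j, 0 ≤ (fourierDiagEntry S i j).re)
    (hord : ∀ i (j j' : ℕ), j ≤ j' →
      (fourierDiagEntry S i j').re ≤ (fourierDiagEntry S i j).re)
    (hX : X = tProd (tProd U S) (tTranspose V)) :
    (∃ (A : Tensor3 N₁ k N₃) (B : Tensor3 k N₂ N₃),
        tProd (tProd U (truncTensor k S)) (tTranspose V) = tProd A B) ∧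
    (∀ (A : Tensor3 N₁ k N₃) (B : Tensor3 k N₂ N₃),
        frobNorm (X - tProd (tProd U (truncTensor k S)) (tTranspose V)) ≤
          frobNorm (X - tProd A B)) := by
  have hk1 : k < N₁ := lt_of_lt_of_le hk (min_le_left _ _)
  have hk2 : k < N₂ := lt_of_lt_of_le hk (min_le_right _ _)
  constructor
  · obtain ⟨E, F, hEF⟩ := trunc_factor hk1 S
    refine ⟨tProd U E, tProd F (tTranspose V), ?_⟩
    rw [tProd_assoc U E (tProd F (tTranspose V)), ← tProd_assoc E F (tTranspose V), hEF,
      ← tProd_assoc U (truncTensor k S) (tTranspose V)]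
  · intro A B
    rcases Nat.eq_zero_or_pos N₃ with h0 | hpos
    · subst h0
      simp [frobNorm]
    · have hn : N₃ ≠ 0 := hpos.ne'
      set Xk := tProd (tProd U (truncTensor k S)) (tTranspose V) with hXkdef
      simp only [frobNorm]
      apply Real.sqrt_le_sqrt
      have hN3 : (0:ℝ) < (N₃:ℝ) := by exact_mod_cast hpos
      have hmul : (N₃:ℝ) * (∑ i : Fin N₃, ∑ p : Fin N₁, ∑ q : Fin N₂, ((X - Xk) i p q)^2)
          ≤ (N₃:ℝ) * (∑ i : Fin N₃, ∑ p : Fin N₁, ∑ q : Fin N₂, ((X - tProd A B) i p q)^2) := by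
        rw [← parseval_total hn (X - Xk), ← parseval_total hn (X - tProd A B)]
        refine Finset.sum_le_sum fun i _ => ?_
        -- per-slice facts
        have hU1 : (fftSlice U i)ᴴ * fftSlice U i = 1 := by
          have h := congrArg (fun T => fftSlice T i) hU.1
          rw [fftSlice_tProd, fftSlice_tTranspose, fftSlice_id] at h
          exact h
        have hU2 : fftSlice U i * (fftSlice U i)ᴴ = 1 := by
          have h := congrArg (fun T => fftSlice T i) hU.2
          rw [fftSlice_tProd, fftSlice_tTranspose, fftSlice_id] at h
          exact h
        have hV1 : (fftSlice V i)ᴴ * fftSlice V i = 1 := by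
          have h := congrArg (fun T => fftSlice T i) hV.1
          rw [fftSlice_tProd, fftSlice_tTranspose, fftSlice_id] at h
          exact h
        have hV2 : fftSlice V i * (fftSlice V i)ᴴ = 1 := by
          have h := congrArg (fun T => fftSlice T i) hV.2
          rw [fftSlice_tProd, fftSlice_tTranspose, fftSlice_id] at h
          exact h
        have hXf : fftSlice X i = fftSlice U i * fftSlice S i * (fftSlice V i)ᴴ := by
          rw [hX, fftSlice_tProd, fftSlice_tProd, fftSlice_tTranspose]
        have hXkf : fftSlice Xk i
            = fftSlice U i * fftSlice (truncTensor k S) i * (fftSlice V i)ᴴ := by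
          rw [hXkdef, fftSlice_tProd, fftSlice_tProd, fftSlice_tTranspose]
        have hABf : fftSlice (tProd A B) i = fftSlice A i * fftSlice B i := fftSlice_tProd A B i
        set s : ℕ → ℝ := fun j => (fourierDiagEntry S i j).re with hs
        have hD : ∀ (p : Fin N₁) (q : Fin N₂), fftSlice S i p q
            = if (p:ℕ) = (q:ℕ) then ((s (p:ℕ) : ℝ) : ℂ) else 0 := by
          intro p q
          by_cases hpq : (p:ℕ) = (q:ℕ)
          · rw [if_pos hpq]
            have hfd : fourierDiagEntry S i (p:ℕ) = fftSlice S i p q := by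
              rw [fourierDiagEntry, dif_pos p.isLt,
                dif_pos (lt_of_eq_of_lt hpq q.isLt)]
              have e1 : (⟨(p:ℕ), p.isLt⟩ : Fin N₁) = p := Fin.eta p p.isLt
              have e2 : (⟨(p:ℕ), lt_of_eq_of_lt hpq q.isLt⟩ : Fin N₂) = q := Fin.ext hpq
              rw [e1, e2]
            rw [← hfd]
            refine Complex.ext ?_ ?_
            · simp [hs]
            · rw [hreal i (p:ℕ), Complex.ofReal_im]
          · rw [if_neg hpq, fftSlice]
            refine Finset.sum_eq_zero fun j _ => ?_
            rw [hSdiag j p q hpq]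
            simp
        have hs0 : ∀ j, 0 ≤ s j := fun j => hnonneg i j
        have hsmono : ∀ j j', j ≤ j' → s j' ≤ s j := fun j j' h => hord i j j' h
        have hsz1 : ∀ j, N₁ ≤ j → s j = 0 := by
          intro j hj
          simp only [hs]
          rw [fourierDiagEntry, dif_neg (not_lt.mpr hj)]
          exact Complex.zero_re
        have hDk : ∀ (p : Fin N₁) (q : Fin N₂), fftSlice (truncTensor k S) i p q
            = if (p:ℕ) < k ∧ (q:ℕ) < k then fftSlice S i p q else 0 :=
          fun p q => fftSlice_trunc k S i p q
        rw [fftSlice_sub, fftSlice_sub, hXf, hXkf, hABf]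
        exact slice_ineq hk1 hk2 (fftSlice U i) (fftSlice V i) (fftSlice S i)
          (fftSlice (truncTensor k S) i) s hU1 hU2 hV1 hV2 hD hs0 hsmono hsz1 hDk
          (fftSlice A i) (fftSlice B i)
      exact le_of_mul_le_mul_left hmul hN3
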